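/- arXiv:1309.4033 — 2 statements merged into one kernel-verified Lean document; each statement's English description precedes it below -/
import Mathlib

section
/- For any prime p, if H is a graph and σ is an automorphism of H of order p, then for any graph G, the number of homomorphisms from G to H is congruent modulo p to the number of homomorphisms from G to H^σ. -/
structure SymGraph (V : Type) where
  Adj : V → V → Prop
  symm : ∀ u v, Adj u v → Adj v u

def SymGraph.IsHom {V W : Type} (G : SymGraph V) (H : SymGraph W) (f : V → W) : Prop :=
  ∀ u v, G.Adj u v → H.Adj (f u) (f v)

noncomputable def homCount {V W : Type} (G : SymGraph V) (H : SymGraph W) : ℕ :=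
  Nat.card {f : V → W // G.IsHom H f}

def SymGraph.IsAut {V : Type} (H : SymGraph V) (σ : Equiv.Perm V) : Prop :=
  ∀ u v, H.Adj u v ↔ H.Adj (σ u) (σ v)

def SymGraph.fixedSubgraph {V : Type} (H : SymGraph V) (σ : Equiv.Perm V) :
    SymGraph {v : V // σ v = v} :=
  ⟨fun u v => H.Adj u v, fun u v h => H.symm u v h⟩

/-!
The cyclic group `⟨σ⟩` of order `p` acts on the homomorphisms `G → H` by postcomposition.
By the orbit-counting congruence for `p`-groups, the number of homomorphisms is congruent
mod `p` to the number of fixed ones, and a homomorphism is fixed by `σ` exactly when it lands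
in the fixed points of `σ`, i.e. when it is a homomorphism `G → H^σ`.
-/

namespace MulAction

theorem mem_fixedPoints_zpowers_iff {G α : Type*} [Group G] [MulAction G α]
    {g : G} {a : α} : a ∈ fixedPoints (Subgroup.zpowers g) α ↔ g • a = a := by
  refine ⟨fun h => h ⟨g, Subgroup.mem_zpowers g⟩, fun h => ?_⟩
  rintro ⟨_, j, rfl⟩
  exact mem_fixedBy_zpow (g := g) h j

end MulAction

namespace SymGraph

open MulAction

variable {U V : Type} {G : SymGraph U} {H : SymGraph V}

abbrev Hom (G : SymGraph U) (H : SymGraph V) : Type := {f : U → V // G.IsHom H f}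

def autGroup (H : SymGraph V) : Subgroup (Equiv.Perm V) where
  carrier := {τ | H.IsAut τ}
  one_mem' _ _ := Iff.rfl
  mul_mem' ha hb u v := (hb u v).trans (ha _ _)
  inv_mem' {τ} hτ u v := by simpa using (hτ (τ⁻¹ u) (τ⁻¹ v)).symm

instance : MulAction H.autGroup (Hom G H) where
  smul τ f := ⟨τ.1 ∘ f.1, fun u v huv => (τ.2 _ _).1 (f.2 u v huv)⟩
  one_smul _ := rfl
  mul_smul _ _ _ := rfl

theorem smul_eq_self_iff {τ : H.autGroup} {f : Hom G H} :
    τ • f = f ↔ ∀ u, τ.1 (f.1 u) = f.1 u := by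
  rw [Subtype.ext_iff, funext_iff]
  rfl

def fixedPointsZpowersEquiv (τ : H.autGroup) :
    fixedPoints (Subgroup.zpowers τ) (Hom G H) ≃ Hom G (H.fixedSubgraph τ) where
  toFun f := ⟨fun u => ⟨f.1.1 u, smul_eq_self_iff.1 (mem_fixedPoints_zpowers_iff.1 f.2) u⟩,
    fun u v huv => f.1.2 u v huv⟩
  invFun g := ⟨⟨fun u => (g.1 u).1, fun u v huv => g.2 u v huv⟩,
    mem_fixedPoints_zpowers_iff.2 (smul_eq_self_iff.2 fun u => (g.1 u).2)⟩
  left_inv _ := rfl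
  right_inv _ := rfl

end SymGraph

theorem stmt1 (p : ℕ) (hp : p.Prime) {V : Type} [Fintype V] (H : SymGraph V)
    (σ : Equiv.Perm V) (hσ : H.IsAut σ) (hord : orderOf σ = p)
    {U : Type} [Fintype U] (G : SymGraph U) :
    homCount G H ≡ homCount G (H.fixedSubgraph σ) [MOD p] := by
  have : Fact p.Prime := ⟨hp⟩
  let τ : H.autGroup := ⟨σ, hσ⟩
  have hcard : Nat.card (Subgroup.zpowers τ) = p ^ 1 := by
    rw [Nat.card_zpowers, pow_one]
    exact (Subgroup.orderOf_mk σ hσ).trans hord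
  calc homCount G H = Nat.card (SymGraph.Hom G H) := rfl
    _ ≡ Nat.card (MulAction.fixedPoints (Subgroup.zpowers τ) (SymGraph.Hom G H)) [MOD p] :=
      (IsPGroup.of_card hcard).card_modEq_card_fixedPoints _
    _ = homCount G (H.fixedSubgraph σ) := Nat.card_congr (SymGraph.fixedPointsZpowersEquiv τ)
end

section
/- Let H be an involution-free tree, e_0 a vertex of degree 2 adjacent to a leaf, and e_ℓ a vertex of even degree such that the unique path e_0, o_1, ..., o_{ℓ-1}, e_ℓ (ℓ ≥ 1) contains no internal vertices of even degree. Then the number of neighbours v of the first vertex after e_0 on this path such that the number of walks of length ℓ from v to e_ℓ in H is odd, is even. -/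
open SimpleGraph Finset

section Aux

variable {V : Type} [Fintype V] [DecidableEq V] (H : SimpleGraph V) [DecidableRel H.Adj]

private lemma zmod2_eq_zero_iff_even (n : ℕ) : ((n : ZMod 2) = 0) ↔ Even n := by
  rw [ZMod.natCast_eq_zero_iff, Nat.even_iff]
  omega

private lemma zmod2_eq_one_of_odd {n : ℕ} (h : Odd n) : (n : ZMod 2) = 1 := by
  obtain ⟨m, hm⟩ := h
  subst hm
  push_cast
  rw [show (2 : ZMod 2) = 0 by decide, zero_mul, zero_add]

/-- In an acyclic graph, any walk is at least as long as any path between the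
same endpoints. -/
private lemma path_length_le (hac : H.IsAcyclic) {u v : V} {q : H.Walk u v}
    (hq : q.IsPath) (w : H.Walk u v) : q.length ≤ w.length := by
  have h := hac.path_unique ⟨q, hq⟩ ⟨w.bypass, w.bypass_isPath⟩
  have h2 : q.length = w.bypass.length := by
    rw [congrArg (fun p : H.Path u v => p.1.length) h]
  exact h2 ▸ w.length_bypass_le

/-- No walks strictly shorter than the unique path. -/
private lemma pow_apply_eq_zero (hac : H.IsAcyclic) {u v : V} {q : H.Walk u v}
    (hq : q.IsPath) {k : ℕ} (hk : k < q.length) :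
    ((H.adjMatrix (ZMod 2)) ^ k) u v = 0 := by
  rw [H.adjMatrix_pow_apply_eq_card_walk]
  have h0 : Fintype.card {p : H.Walk u v | p.length = k} = 0 := by
    rw [Fintype.card_eq_zero_iff]
    constructor
    rintro ⟨w, hw⟩
    have := path_length_le H hac hq w
    simp only [Set.mem_setOf_eq] at hw
    omega
  rw [h0, Nat.cast_zero]

/-- A neighbour of the start of a path which is not the second vertex is
not on the path (in an acyclic graph). -/
private lemma adj_not_mem_support (hac : H.IsAcyclic) {u v : V} {q : H.Walk u v}
    (hq : q.IsPath) {x : V} (hx : H.Adj u x) (hne : x ≠ q.getVert 1) :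
    x ∉ q.support := by
  intro hmem
  have ht : (q.takeUntil x hmem).IsPath := hq.takeUntil hmem
  have hp1 : (SimpleGraph.Walk.cons hx SimpleGraph.Walk.nil).IsPath := by
    rw [SimpleGraph.Walk.cons_isPath_iff]
    refine ⟨SimpleGraph.Walk.IsPath.nil, ?_⟩
    simp [hx.ne]
  have h := hac.path_unique ⟨q.takeUntil x hmem, ht⟩
    ⟨SimpleGraph.Walk.cons hx SimpleGraph.Walk.nil, hp1⟩
  have heq : q.takeUntil x hmem = SimpleGraph.Walk.cons hx SimpleGraph.Walk.nil :=
    congrArg Subtype.val h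
  apply hne
  have h1 : q.getVert 1 = ((q.takeUntil x hmem).append (q.dropUntil x hmem)).getVert 1 := by
    rw [q.take_spec hmem]
  rw [h1, SimpleGraph.Walk.getVert_append, heq]
  simp

/-- In an acyclic graph, the number of walks of length equal to that of a path
between the same endpoints is odd (it is exactly one). -/
private lemma pow_apply_eq_one (hac : H.IsAcyclic) {u v : V} (q : H.Walk u v)
    (hq : q.IsPath) : ((H.adjMatrix (ZMod 2)) ^ q.length) u v = 1 := by
  induction q with
  | nil => simp
  | @cons a b c h q ih =>
    have hq' : q.IsPath := hq.of_cons
    rw [SimpleGraph.Walk.length_cons, pow_succ', SimpleGraph.adjMatrix_mul_apply]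
    have hb : b ∈ H.neighborFinset a := by rwa [SimpleGraph.mem_neighborFinset]
    have hsum : ∑ x ∈ H.neighborFinset a, ((H.adjMatrix (ZMod 2)) ^ q.length) x c
        = ((H.adjMatrix (ZMod 2)) ^ q.length) b c := by
      apply Finset.sum_eq_single_of_mem b hb
      intro x hxmem hxb
      have hxadj : H.Adj a x := (SimpleGraph.mem_neighborFinset _ _ _).mp hxmem
      have hgv1 : (SimpleGraph.Walk.cons h q).getVert 1 = b := by
        rw [SimpleGraph.Walk.getVert_cons_succ, SimpleGraph.Walk.getVert_zero]
      have hns : x ∉ (SimpleGraph.Walk.cons h q).support :=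
        adj_not_mem_support H hac hq hxadj (by rw [hgv1]; exact hxb)
      have hbig : (SimpleGraph.Walk.cons hxadj.symm (SimpleGraph.Walk.cons h q)).IsPath := by
        rw [SimpleGraph.Walk.cons_isPath_iff]
        exact ⟨hq, hns⟩
      exact pow_apply_eq_zero H hac hbig (by simp only [SimpleGraph.Walk.length_cons]; omega)
    rw [hsum, ih hq']

/-- Key parity lemma: given a path from `u` to `el` all of whose vertices
except `el` have odd degree, with `el` of even degree, the number of walks
from `u` to `el` of length two more than the path length is even. -/
private lemma main_even (hac : H.IsAcyclic) {u el : V} (q : H.Walk u el) (hq : q.IsPath)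
    (hdegl : Even (H.degree el))
    (hoddsup : ∀ x ∈ q.support, x ≠ el → Odd (H.degree x)) :
    ((H.adjMatrix (ZMod 2)) ^ (q.length + 2)) u el = 0 := by
  induction q with
  | @nil w =>
    simp only [SimpleGraph.Walk.length_nil, zero_add]
    rw [pow_two, SimpleGraph.adjMatrix_mul_apply]
    have h1 : ∀ x ∈ H.neighborFinset w, H.adjMatrix (ZMod 2) x w = 1 := by
      intro x hx
      rw [SimpleGraph.adjMatrix_apply,
        if_pos ((SimpleGraph.mem_neighborFinset _ _ _).mp hx).symm]
    rw [Finset.sum_congr rfl h1, Finset.sum_const, nsmul_eq_mul, mul_one,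
      SimpleGraph.card_neighborFinset_eq_degree]
    exact (zmod2_eq_zero_iff_even _).2 hdegl
  | @cons a b c h q ih =>
    have hq' : q.IsPath := hq.of_cons
    have ha_ne : a ∉ q.support := ((SimpleGraph.Walk.cons_isPath_iff h q).mp hq).2
    have hanec : a ≠ c := fun hh => ha_ne (hh ▸ q.end_mem_support)
    have hodda : Odd (H.degree a) :=
      hoddsup a (SimpleGraph.Walk.start_mem_support _) hanec
    rw [SimpleGraph.Walk.length_cons, show q.length + 1 + 2 = (q.length + 2) + 1 by omega,
      pow_succ', SimpleGraph.adjMatrix_mul_apply]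
    have hb : b ∈ H.neighborFinset a := by rwa [SimpleGraph.mem_neighborFinset]
    rw [← Finset.sum_erase_add _ _ hb]
    have hib : ((H.adjMatrix (ZMod 2)) ^ (q.length + 2)) b c = 0 := by
      exact ih hq' hdegl (fun x hx hxne => hoddsup x
        (by rw [SimpleGraph.Walk.support_cons]; exact List.mem_cons_of_mem _ hx) hxne)
    rw [hib, add_zero]
    have hone : ∀ x ∈ (H.neighborFinset a).erase b,
        ((H.adjMatrix (ZMod 2)) ^ (q.length + 2)) x c = 1 := by
      intro x hx
      obtain ⟨hxb, hxmem⟩ := Finset.mem_erase.mp hx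
      have hxadj : H.Adj a x := (SimpleGraph.mem_neighborFinset _ _ _).mp hxmem
      have hgv1 : (SimpleGraph.Walk.cons h q).getVert 1 = b := by
        rw [SimpleGraph.Walk.getVert_cons_succ, SimpleGraph.Walk.getVert_zero]
      have hns : x ∉ (SimpleGraph.Walk.cons h q).support :=
        adj_not_mem_support H hac hq hxadj (by rw [hgv1]; exact hxb)
      have hbig : (SimpleGraph.Walk.cons hxadj.symm (SimpleGraph.Walk.cons h q)).IsPath := by
        rw [SimpleGraph.Walk.cons_isPath_iff]
        exact ⟨hq, hns⟩
      have := pow_apply_eq_one H hac _ hbig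
      simpa [SimpleGraph.Walk.length_cons] using this
    rw [Finset.sum_congr rfl hone, Finset.sum_const, nsmul_eq_mul, mul_one,
      Finset.card_erase_of_mem hb, SimpleGraph.card_neighborFinset_eq_degree]
    exact (zmod2_eq_zero_iff_even _).2 (Nat.Odd.sub_odd hodda odd_one)

end Aux

/-- A permutation of the vertices is an automorphism of the simple graph H. -/
def IsGraphAut {V : Type} (H : SimpleGraph V) (σ : Equiv.Perm V) : Prop :=
  ∀ u v, H.Adj u v ↔ H.Adj (σ u) (σ v)

/-- In an involution-free tree H, let e₀ be a vertex of degree 2 adjacent to a leaf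
and e_ℓ a vertex of even degree with all internal vertices of the (unique) path
from e₀ to e_ℓ of odd degree. Then the number of neighbours v of the first vertex
after e₀ on this path for which the number of walks of length ℓ from v to e_ℓ is
odd, is even. -/
theorem stmt15 {V : Type} [Fintype V] [DecidableEq V] (H : SimpleGraph V)
    [DecidableRel H.Adj] (htree : H.IsTree)
    (hinv : ¬∃ σ : Equiv.Perm V, IsGraphAut H σ ∧ orderOf σ = 2)
    (e0 el : V) (hdeg0 : H.degree e0 = 2)
    (hleaf : ∃ l, H.Adj e0 l ∧ H.degree l = 1)
    (hdegl : Even (H.degree el))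
    (ℓ : ℕ) (hℓ : 1 ≤ ℓ) (p : H.Walk e0 el) (hp : p.IsPath) (hlen : p.length = ℓ)
    (hodd : ∀ i, 0 < i → i < ℓ → Odd (H.degree (p.getVert i))) :
    Even (Nat.card {v : V // H.Adj (p.getVert 1) v ∧
      Odd (Nat.card {w : H.Walk v el // w.length = ℓ})}) := by
  classical
  have hac : H.IsAcyclic := htree.2
  cases p with
  | nil => simp at hlen; omega
  | @cons _ b _ h q =>
    have hq : q.IsPath := hp.of_cons
    have hql : q.length + 1 = ℓ := by
      simpa [SimpleGraph.Walk.length_cons] using hlen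
    have hgv : (SimpleGraph.Walk.cons h q).getVert 1 = b := by
      rw [SimpleGraph.Walk.getVert_cons_succ, SimpleGraph.Walk.getVert_zero]
    have hM : ((H.adjMatrix (ZMod 2)) ^ (q.length + 2)) b el = 0 := by
      apply main_even H hac q hq hdegl
      intro x hx hxne
      obtain ⟨n, hn, hnle⟩ := SimpleGraph.Walk.mem_support_iff_exists_getVert.mp hx
      have hnne : n ≠ q.length := by
        intro hh
        exact hxne (by rw [← hn, hh, SimpleGraph.Walk.getVert_length])
      have h1 : (SimpleGraph.Walk.cons h q).getVert (n + 1) = x := by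
        rw [SimpleGraph.Walk.getVert_cons_succ]; exact hn
      have := hodd (n + 1) (by omega) (by omega)
      rwa [h1] at this
    rw [hgv]
    set P : V → Prop := fun v => H.Adj b v ∧
      Odd (Nat.card {w : H.Walk v el // w.length = ℓ}) with hP
    have hcard : Nat.card {v : V // P v} = (Finset.univ.filter P).card := by
      rw [Nat.card_eq_fintype_card, Fintype.card_subtype]
    rw [show {v : V // H.Adj b v ∧ Odd (Nat.card {w : H.Walk v el // w.length = ℓ})}
      = {v : V // P v} from rfl, hcard, ← zmod2_eq_zero_iff_even, ← Finset.sum_boole]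
    have hcount : ∀ v : V, (Fintype.card {p : H.Walk v el | p.length = ℓ} : ℕ)
        = Nat.card {w : H.Walk v el // w.length = ℓ} := by
      intro v
      rw [Nat.card_eq_fintype_card]
      exact Fintype.card_congr (Equiv.subtypeEquivRight fun x => Iff.rfl)
    have key : ∀ v : V, (if P v then (1 : ZMod 2) else 0)
        = H.adjMatrix (ZMod 2) b v * ((H.adjMatrix (ZMod 2)) ^ ℓ) v el := by
      intro v
      rw [SimpleGraph.adjMatrix_apply, H.adjMatrix_pow_apply_eq_card_walk]
      by_cases hadj : H.Adj b v
      · by_cases hoddv : Odd (Nat.card {w : H.Walk v el // w.length = ℓ})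
        · rw [if_pos ⟨hadj, hoddv⟩, if_pos hadj, one_mul, hcount v]
          exact (zmod2_eq_one_of_odd hoddv).symm
        · rw [if_neg (fun hh => hoddv hh.2), if_pos hadj, one_mul, hcount v]
          exact ((zmod2_eq_zero_iff_even _).2 (Nat.not_odd_iff_even.mp hoddv)).symm
      · rw [if_neg (fun hh => hadj hh.1), if_neg hadj, zero_mul]
    rw [Finset.sum_congr rfl (fun v _ => key v)]
    have hmul : ∑ v : V, H.adjMatrix (ZMod 2) b v * ((H.adjMatrix (ZMod 2)) ^ ℓ) v el
        = ((H.adjMatrix (ZMod 2)) ^ (ℓ + 1)) b el := by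
      rw [pow_succ', Matrix.mul_apply]
    rw [hmul, show ℓ + 1 = q.length + 2 by omega]
    exact hM
end
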